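/- arXiv:1303.3699 — 2 statements merged into one kernel-verified Lean document; each statement's English description precedes it below -/
import Mathlib

section
/- Symmetry is preserved under tensor product of formal Fourier-Jacobi series: suppose f = ∑ φ_m q'^m and g = ∑ ψ_m q'^m are formal series whose coefficients have Fourier expansions φ_m = ∑_{n,r} c(φ_m;n,r) q^n ζ^r with values in V_ρ resp. V_σ, satisfying the symmetry relations c(φ_m;n,r) = i^{2k} ρ(δ) c(φ_n;m,r) and c(ψ_m;n,r) = i^{2k₁} σ(δ) c(ψ_n;m,r). Then the Cauchy product f⊗g = ∑_M (∑_{m+m₁=M} φ_m ⊗ ψ_{m₁}) q'^M has coefficients whose Fourier coefficients satisfy c((f⊗g)_M; n, r) = i^{2(k+k₁)} (ρ⊗σ)(δ) c((f⊗g)_n; M, r). -/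
/-!
By the two symmetry relations, each term `c(φ_m; n₁, r₁) ⊗ c(ψ_{m₁}; n₂, r₂)` equals
`i^{2(k+k₁)} (ρ ⊗ σ)(δ)` applied to the transposed term `c(φ_{n₁}; m, r₁) ⊗ c(ψ_{n₂}; m₁, r₂)`.
Finite support in `r` lets the linear map pass through the sum over `r₁ + r₂ = r`, and
exchanging the two antidiagonal sums matches every term with its transpose.
-/

open Function TensorProduct

noncomputable section

lemma support_tmul_comp_subset {R G M N : Type*} [CommSemiring R]
    [AddCommMonoid M] [Module R M] [AddCommMonoid N] [Module R N] (x : G → M) (y : G → N) :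
    support (fun s : G × G => x s.1 ⊗ₜ[R] y s.2) ⊆ support x ×ˢ support y := by
  intro s hs
  constructor
  · exact fun hx => hs (by simp [hx])
  · exact fun hy => hs (by simp [hy])

section CauchyCoefficient

variable {R G M N M' N' : Type*} [CommSemiring R] [AddMonoid G]
  [AddCommMonoid M] [Module R M] [AddCommMonoid N] [Module R N]
  [AddCommMonoid M'] [Module R M'] [AddCommMonoid N'] [Module R N']

def tmulConv (x : G → M) (y : G → N) (r : G) : M ⊗[R] N :=
  ∑ᶠ (s : G × G) (_ : s.1 + s.2 = r), x s.1 ⊗ₜ[R] y s.2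

lemma tmulConv_eq_smul_map {x : G → M} {y : G → N} {x' : G → M'} {y' : G → N'}
    (hx' : (support x').Finite) (hy' : (support y').Finite)
    (a b : R) (f : M' →ₗ[R] M) (g : N' →ₗ[R] N)
    (hx : ∀ t, x t = a • f (x' t)) (hy : ∀ t, y t = b • g (y' t)) (r : G) :
    tmulConv x y r = (a * b) • TensorProduct.map f g (tmulConv x' y' r) := by
  set L := (a * b) • TensorProduct.map f g
  have hfin : ({s : G × G | s.1 + s.2 = r} ∩ support fun s => x' s.1 ⊗ₜ[R] y' s.2).Finite :=
    ((hx'.prod hy').subset (support_tmul_comp_subset x' y')).inter_of_right _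
  calc tmulConv x y r = ∑ᶠ s ∈ {s : G × G | s.1 + s.2 = r}, L (x' s.1 ⊗ₜ y' s.2) :=
        finsum_mem_congr rfl fun s _ => by
          rw [hx, hy, smul_tmul_smul, LinearMap.smul_apply, map_tmul]
    _ = L (tmulConv x' y' r) := (L.toAddMonoidHom.map_finsum_mem' hfin).symm

end CauchyCoefficient

theorem statement7_general {V W : Type*} [AddCommGroup V] [Module ℂ V] [AddCommGroup W] [Module ℂ W]
    (twok twok₁ : ℤ) (A : V →ₗ[ℂ] V) (B : W →ₗ[ℂ] W)
    (c : ℕ → ℕ → ℚ → V) (c' : ℕ → ℕ → ℚ → W)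
    (hfin : ∀ m n, (Function.support (c m n)).Finite)
    (hfin' : ∀ m n, (Function.support (c' m n)).Finite)
    (hsym : ∀ m n r, c m n r = (Complex.I ^ twok) • A (c n m r))
    (hsym' : ∀ m n r, c' m n r = (Complex.I ^ twok₁) • B (c' n m r)) :
    ∀ (M n : ℕ) (r : ℚ),
      (∑ p ∈ Finset.HasAntidiagonal.antidiagonal M, ∑ q ∈ Finset.HasAntidiagonal.antidiagonal n,
        ∑ᶠ (s : ℚ × ℚ) (_ : s.1 + s.2 = r), c p.1 q.1 s.1 ⊗ₜ[ℂ] c' p.2 q.2 s.2) =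
      (Complex.I ^ (twok + twok₁)) •
        (TensorProduct.map A B)
          (∑ p ∈ Finset.HasAntidiagonal.antidiagonal n, ∑ q ∈ Finset.HasAntidiagonal.antidiagonal M,
            ∑ᶠ (s : ℚ × ℚ) (_ : s.1 + s.2 = r), c p.1 q.1 s.1 ⊗ₜ[ℂ] c' p.2 q.2 s.2) := by
  intro M n r
  rw [Finset.sum_comm, map_sum, Finset.smul_sum]
  refine Finset.sum_congr rfl fun p _ => ?_
  rw [map_sum, Finset.smul_sum]
  refine Finset.sum_congr rfl fun q _ => ?_
  rw [zpow_add₀ Complex.I_ne_zero]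
  exact tmulConv_eq_smul_map (hfin p.1 q.1) (hfin' p.2 q.2) _ _ A B
    (hsym q.1 p.1) (hsym' q.2 p.2) r

/-- Symmetry is preserved under tensor products of formal Fourier-Jacobi series.
Jacobi forms are modeled abstractly through their Fourier coefficients
`c(φ_m; n, r) ∈ V_ρ` (respectively `c(ψ_m; n, r) ∈ V_σ`), with `m, n ∈ ℕ` and `r ∈ ℚ`
of finite support; `i^{2k}` is encoded as `I ^ twok` with `twok = 2k ∈ ℤ`, and `ρ(δ)`,
`σ(δ)` as linear endomorphisms `A`, `B`. If both series satisfy the symmetry relation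
`c(φ_m;n,r) = i^{2k} ρ(δ) c(φ_n;m,r)`, then so does their Cauchy tensor product, with
weight `k + k₁` and operator `(ρ ⊗ σ)(δ) = A ⊗ B`. -/
theorem statement7 {V W : Type*} [AddCommGroup V] [Module ℂ V] [AddCommGroup W] [Module ℂ W]
    [FiniteDimensional ℂ V] [FiniteDimensional ℂ W]
    (twok twok₁ : ℤ) (A : V →ₗ[ℂ] V) (B : W →ₗ[ℂ] W)
    (c : ℕ → ℕ → ℚ → V) (c' : ℕ → ℕ → ℚ → W)
    (hfin : ∀ m n, (Function.support (c m n)).Finite)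
    (hfin' : ∀ m n, (Function.support (c' m n)).Finite)
    (hsym : ∀ m n r, c m n r = (Complex.I ^ twok) • A (c n m r))
    (hsym' : ∀ m n r, c' m n r = (Complex.I ^ twok₁) • B (c' n m r)) :
    ∀ (M n : ℕ) (r : ℚ),
      (∑ p ∈ Finset.HasAntidiagonal.antidiagonal M, ∑ q ∈ Finset.HasAntidiagonal.antidiagonal n,
        ∑ᶠ (s : ℚ × ℚ) (_ : s.1 + s.2 = r), c p.1 q.1 s.1 ⊗ₜ[ℂ] c' p.2 q.2 s.2) =
      (Complex.I ^ (twok + twok₁)) •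
        (TensorProduct.map A B)
          (∑ p ∈ Finset.HasAntidiagonal.antidiagonal n, ∑ q ∈ Finset.HasAntidiagonal.antidiagonal M,
            ∑ᶠ (s : ℚ × ℚ) (_ : s.1 + s.2 = r), c p.1 q.1 s.1 ⊗ₜ[ℂ] c' p.2 q.2 s.2) :=
  statement7_general twok twok₁ A B c c' hfin hfin' hsym hsym'
end
end

section
/- Symmetry is preserved under the Hom-pairing of formal Fourier-Jacobi series: if f = ∑ φ_m q'^m has V_ρ-valued coefficients with Fourier coefficients satisfying c(φ_m;n,r) = i^{2k} ρ(δ) c(φ_n;m,r), and g = ∑ ψ_m q'^m has Hom(V_ρ,V_σ)-valued coefficients with c(ψ_m;n,r) = i^{2k₁} τ(δ) c(ψ_n;m,r) (where τ(δ)(λ) = σ(δ) ∘ λ ∘ ρ(δ)⁻¹), then the series ⟨g,f⟩ = ∑_M ∑_{m+m₁=M} ⟨ψ_{m₁}, φ_m⟩ q'^M has Fourier coefficients satisfying c(⟨g,f⟩_M; n, r) = i^{2(k+k₁)} σ(δ) c(⟨g,f⟩_n; M, r). -/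
/-!
In each summand `c(ψ_{m₁}; n₂, r₂) (c(φ_m; n₁, r₁))` of the double convolution, the two symmetries
produce the factor `i^{2k} i^{2k₁} σ(δ)`, the `ρ(δ)⁻¹` of `τ(δ)` cancelling the `ρ(δ)` coming from
`f`. Since the coefficients of `f` have finite support, the inner convolution over `r₁ + r₂ = r`
is a finite sum, so `σ(δ)` can be pulled out of it; exchanging the two antidiagonal sums then
swaps the roles of `M` and `n`.
-/

noncomputable section

open Function Finset.HasAntidiagonal

section Convolution

variable {R G V W W' : Type*} [CommSemiring R] [AddGroup G]
  [AddCommMonoid V] [Module R V] [AddCommMonoid W] [Module R W] [AddCommMonoid W'] [Module R W']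

def convCoeff (φ : G → V) (ψ : G → V →ₗ[R] W) (r : G) : W :=
  ∑ᶠ (s : G × G) (_ : s.1 + s.2 = r), ψ s.2 (φ s.1)

theorem finite_inter_support_convolution (φ : G → V) (ψ : G → V →ₗ[R] W)
    (hφ : (support φ).Finite) (r : G) :
    ({s : G × G | s.1 + s.2 = r} ∩ support fun s => ψ s.2 (φ s.1)).Finite := by
  refine (hφ.image fun x => (x, -x + r)).subset ?_
  rintro ⟨x, y⟩ ⟨hxy, hs⟩
  refine ⟨x, fun hx => hs ?_, ?_⟩
  · simp [hx]
  · simp [← show x + y = r from hxy]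

theorem map_convCoeff (L : W →ₗ[R] W') (φ : G → V) (ψ : G → V →ₗ[R] W)
    (hφ : (support φ).Finite) (r : G) :
    L (convCoeff φ ψ r) = convCoeff φ (fun y => L ∘ₗ ψ y) r :=
  L.toAddMonoidHom.map_finsum_mem' (finite_inter_support_convolution φ ψ hφ r)

theorem convCoeff_eq_smul_map (c₁ c₂ : R) (A : V ≃ₗ[R] V) (B : W →ₗ[R] W)
    {φ φ' : G → V} {ψ ψ' : G → V →ₗ[R] W}
    (hφ : ∀ x, φ x = c₁ • A (φ' x)) (hψ : ∀ y, ψ y = c₂ • (B ∘ₗ ψ' y ∘ₗ A.symm))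
    (hφ' : (support φ').Finite) (r : G) :
    convCoeff φ ψ r = (c₁ * c₂) • B (convCoeff φ' ψ' r) := by
  rw [← LinearMap.smul_apply (c₁ * c₂) B, map_convCoeff _ _ _ hφ']
  refine finsum_congr fun s => finsum_congr fun _ => ?_
  simp [hφ, hψ, smul_smul]

end Convolution

section Pairing

variable {R N G V W : Type*} [CommSemiring R] [AddMonoid N] [Finset.HasAntidiagonal N]
  [AddGroup G] [AddCommMonoid V] [Module R V] [AddCommMonoid W] [Module R W]

def pairingCoeff (cf : N → N → G → V) (cg : N → N → G → V →ₗ[R] W) (M n : N) (r : G) : W :=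
  ∑ p ∈ antidiagonal M, ∑ q ∈ antidiagonal n, convCoeff (cf p.1 q.1) (cg p.2 q.2) r

theorem pairingCoeff_symm (c₁ c₂ : R) (A : V ≃ₗ[R] V) (B : W →ₗ[R] W)
    (cf : N → N → G → V) (cg : N → N → G → V →ₗ[R] W)
    (hfin : ∀ m n, (support (cf m n)).Finite)
    (hsym : ∀ m n x, cf m n x = c₁ • A (cf n m x))
    (hsym' : ∀ m n y, cg m n y = c₂ • (B ∘ₗ cg n m y ∘ₗ A.symm)) (M n : N) (r : G) :
    pairingCoeff cf cg M n r = (c₁ * c₂) • B (pairingCoeff cf cg n M r) := by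
  simp only [pairingCoeff, map_sum, Finset.smul_sum]
  rw [Finset.sum_comm]
  exact Finset.sum_congr rfl fun _ _ => Finset.sum_congr rfl fun _ _ =>
    convCoeff_eq_smul_map c₁ c₂ A B (hsym _ _) (hsym' _ _) (hfin _ _) r

end Pairing

/-- `cf m n r` and `cg m n r` stand for `c(φ_m; n, r)` and `c(ψ_m; n, r)`, `I ^ twok` for
`i^{2k}`, `A` for `ρ(δ)` and `B` for `σ(δ)`. -/
theorem statement8_general {V W : Type*} [AddCommGroup V] [Module ℂ V] [AddCommGroup W] [Module ℂ W]
    (twok twok₁ : ℤ) (A : V ≃ₗ[ℂ] V) (B : W →ₗ[ℂ] W)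
    (cf : ℕ → ℕ → ℚ → V) (cg : ℕ → ℕ → ℚ → (V →ₗ[ℂ] W))
    (hfin : ∀ m n, (Function.support (cf m n)).Finite)
    (hsym : ∀ m n r, cf m n r = (Complex.I ^ twok) • (A : V →ₗ[ℂ] V) (cf n m r))
    (hsym' : ∀ m n r, cg m n r =
      (Complex.I ^ twok₁) • (B ∘ₗ (cg n m r) ∘ₗ (A.symm : V →ₗ[ℂ] V))) :
    ∀ (M n : ℕ) (r : ℚ),
      (∑ p ∈ Finset.HasAntidiagonal.antidiagonal M, ∑ q ∈ Finset.HasAntidiagonal.antidiagonal n,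
        ∑ᶠ (s : ℚ × ℚ) (_ : s.1 + s.2 = r), cg p.2 q.2 s.2 (cf p.1 q.1 s.1)) =
      (Complex.I ^ (twok + twok₁)) •
        B (∑ p ∈ Finset.HasAntidiagonal.antidiagonal n, ∑ q ∈ Finset.HasAntidiagonal.antidiagonal M,
            ∑ᶠ (s : ℚ × ℚ) (_ : s.1 + s.2 = r), cg p.2 q.2 s.2 (cf p.1 q.1 s.1)) := by
  intro M n r
  rw [zpow_add₀ Complex.I_ne_zero]
  exact pairingCoeff_symm _ _ A B cf cg hfin hsym hsym' M n r

/-- Symmetry is preserved under the Hom-pairing of formal Fourier-Jacobi series.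
Coefficients are modeled abstractly: `cf m n r ∈ V_ρ` are the Fourier coefficients
`c(φ_m; n, r)` of `f`, and `cg m n r ∈ Hom(V_ρ, V_σ)` those of `g`; `i^{2k}` is encoded
as `I ^ twok`, `ρ(δ)` as a linear automorphism `A` of `V`, `σ(δ)` as an endomorphism `B`
of `W`, and `τ(δ)(λ) = σ(δ) ∘ λ ∘ ρ(δ)⁻¹`. If `f` and `g` are symmetric, then the
coefficients of `⟨g, f⟩` (given by double convolution) satisfy
`c(⟨g,f⟩_M; n, r) = i^{2(k+k₁)} σ(δ) c(⟨g,f⟩_n; M, r)`. -/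
theorem statement8 {V W : Type*} [AddCommGroup V] [Module ℂ V] [AddCommGroup W] [Module ℂ W]
    [FiniteDimensional ℂ V] [FiniteDimensional ℂ W]
    (twok twok₁ : ℤ) (A : V ≃ₗ[ℂ] V) (B : W →ₗ[ℂ] W)
    (cf : ℕ → ℕ → ℚ → V) (cg : ℕ → ℕ → ℚ → (V →ₗ[ℂ] W))
    (hfin : ∀ m n, (Function.support (cf m n)).Finite)
    (hfin' : ∀ m n, (Function.support (cg m n)).Finite)
    (hsym : ∀ m n r, cf m n r = (Complex.I ^ twok) • (A : V →ₗ[ℂ] V) (cf n m r))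
    (hsym' : ∀ m n r, cg m n r =
      (Complex.I ^ twok₁) • (B ∘ₗ (cg n m r) ∘ₗ (A.symm : V →ₗ[ℂ] V))) :
    ∀ (M n : ℕ) (r : ℚ),
      (∑ p ∈ Finset.HasAntidiagonal.antidiagonal M, ∑ q ∈ Finset.HasAntidiagonal.antidiagonal n,
        ∑ᶠ (s : ℚ × ℚ) (_ : s.1 + s.2 = r), cg p.2 q.2 s.2 (cf p.1 q.1 s.1)) =
      (Complex.I ^ (twok + twok₁)) •
        B (∑ p ∈ Finset.HasAntidiagonal.antidiagonal n, ∑ q ∈ Finset.HasAntidiagonal.antidiagonal M,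
            ∑ᶠ (s : ℚ × ℚ) (_ : s.1 + s.2 = r), cg p.2 q.2 s.2 (cf p.1 q.1 s.1)) :=
  statement8_general twok twok₁ A B cf cg hfin hsym hsym'
end
end
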